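/- In a Grothendieck topos, let X be an object and let (X_i)_{i ∈ I} and (Y_j)_{j ∈ J} be two families of subobjects of X whose underlying objects are connected and such that, for each of the two families, the canonical morphism from the coproduct of the underlying objects to X (induced by the subobject inclusions) is an isomorphism. Then there exists a bijection e : I ≃ J such that X_i = Y_{e i} in the subobject lattice of X for every i ∈ I. -/

import Mathlib

/-!
Formalisation of a statement from "On the profinite fundamental group of a
connected Grothendieck topos" (Berger–Iwaniack).  A Grothendieck topos is
modelled as `Sheaf J (Type u)` for a small site `(C, J)`.
-/

open CategoryTheory CategoryTheory.Limits

universe u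

instance sheafTypeHasColimits {C : Type u} [SmallCategory C] {J : GrothendieckTopology C} :
    HasColimits (Sheaf J (Type u)) := by
  have : HasSheafify J (Type u) := inferInstance
  exact Sheaf.instHasColimitsOfSize

/-- A subobject `s` of `X` is complemented if it has a complement in the
subobject lattice of `X`. -/
def IsComplementedSub {C : Type u} [SmallCategory C] {J : GrothendieckTopology C}
    {X : Sheaf J (Type u)} (s : Subobject X) : Prop :=
  ∃ t : Subobject X, s ⊓ t = ⊥ ∧ s ⊔ t = ⊤

/-- An object is decidable if its diagonal, regarded as a subobject of `X ⨯ X`,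
is complemented. -/
def IsDecidableObj {C : Type u} [SmallCategory C] {J : GrothendieckTopology C}
    (X : Sheaf J (Type u)) : Prop :=
  IsComplementedSub (Subobject.mk (diag X))

/-- An object is connected if it is not initial and its only complemented
subobjects are `⊥` and `⊤`. -/
def IsConnectedObj {C : Type u} [SmallCategory C] {J : GrothendieckTopology C}
    (X : Sheaf J (Type u)) : Prop :=
  (¬ Nonempty (IsInitial X)) ∧
    ∀ s : Subobject X, IsComplementedSub s → s = ⊥ ∨ s = ⊤

/-- An object is locally connected if it is (isomorphic to) a coproduct of
connected objects. -/
def IsLocallyConnectedObj {C : Type u} [SmallCategory C] {J : GrothendieckTopology C}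
    (X : Sheaf J (Type u)) : Prop :=
  ∃ (I : Type u) (Z : I → Sheaf J (Type u)),
    (∀ i, IsConnectedObj (Z i)) ∧ Nonempty (X ≅ ∐ Z)

/-- An object is locally constant if it is trivialised, with constant fibres,
by some cover of the terminal object. -/
def IsLocallyConstantObj {C : Type u} [SmallCategory C] {J : GrothendieckTopology C}
    (X : Sheaf J (Type u)) : Prop :=
  ∃ (I : Type u) (U : I → Sheaf J (Type u)),
    Epi (terminal.from (∐ U)) ∧
    ∀ i, ∃ (S : Type u)
      (e : X ⨯ U i ≅ (constantSheaf J (Type u)).obj S ⨯ U i),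
      e.hom ≫ Limits.prod.snd = Limits.prod.snd

/-- An object is locally finite if it is trivialised, with finite constant
fibres, by some cover of the terminal object. -/
def IsLocallyFiniteObj {C : Type u} [SmallCategory C] {J : GrothendieckTopology C}
    (X : Sheaf J (Type u)) : Prop :=
  ∃ (I : Type u) (U : I → Sheaf J (Type u)),
    Epi (terminal.from (∐ U)) ∧
    ∀ i, ∃ (n : ℕ)
      (e : X ⨯ U i ≅ (constantSheaf J (Type u)).obj (ULift.{u} (Fin n)) ⨯ U i),
      e.hom ≫ Limits.prod.snd = Limits.prod.snd

/-- An object is finite if it is locally finite and a finite coproduct of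
connected objects. -/
def IsFiniteObj {C : Type u} [SmallCategory C] {J : GrothendieckTopology C}
    (X : Sheaf J (Type u)) : Prop :=
  IsLocallyFiniteObj X ∧
    ∃ (n : ℕ) (Z : Fin n → Sheaf J (Type u)),
      (∀ k, IsConnectedObj (Z k)) ∧ Nonempty (X ≅ ∐ Z)

/-- An object is a sum of finite objects if it is isomorphic to a coproduct of
finite objects. -/
def IsSumOfFiniteObj {C : Type u} [SmallCategory C] {J : GrothendieckTopology C}
    (X : Sheaf J (Type u)) : Prop :=
  ∃ (I : Type u) (Z : I → Sheaf J (Type u)),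
    (∀ i, IsFiniteObj (Z i)) ∧ Nonempty (X ≅ ∐ Z)

/-- A Galois object: a connected, globally supported object `A` such that the
canonical morphism `∐_{g ∈ Aut A} A ⟶ A ⨯ A` is an isomorphism. -/
def IsGaloisObj {C : Type u} [SmallCategory C] {J : GrothendieckTopology C}
    (A : Sheaf J (Type u)) : Prop :=
  IsConnectedObj A ∧ Epi (terminal.from A) ∧
    IsIso (Limits.Sigma.desc (f := fun _ : Aut A => A)
      (fun g => Limits.prod.lift (𝟙 A) g.hom))

/-!
Pulling the splitting `X = Y_j ⊔ ∐_{k ≠ j} Y_k` back along a connected summand `X_i` gives a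
complemented subobject of `X_i`, because binary coproducts in a topos are disjoint and
stable under pullback; hence `X_i ≤ Y_j` or `X_i ⊓ Y_j = ⊥`. The meets `X_i ⊓ Y_j` cannot
all vanish, since every section of `X` locally factors through some `Y_j`, so each `X_i`
lies in some `Y_j` and symmetrically. As distinct summands are disjoint and connected
objects are not initial, these two assignments are mutually inverse bijections.
-/

open Opposite

universe v w

theorem CategoryTheory.Sieve.iSup_apply {C : Type*} [Category C] {X Y : C} {ι : Sort*}
    {S : ι → Sieve X} (f : Y ⟶ X) : (⨆ i, S i) f ↔ ∃ i, S i f := by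
  simp [iSup]

namespace CategoryTheory.Limits

variable {𝒞 : Type*} [Category.{v} 𝒞] {I : Type*} {F : I → 𝒞}

noncomputable def Cofan.IsColimit.binaryCofanNe {c : Cofan F} (hc : IsColimit c) (i : I)
    [HasCoproduct fun k : {k // k ≠ i} => F k] :
    IsColimit (BinaryCofan.mk (c.inj i) (Sigma.desc fun k : {k // k ≠ i} => c.inj k)) := by
  classical
  let desc {T : 𝒞} (a : F i ⟶ T) (b : (∐ fun k : {k // k ≠ i} => F k) ⟶ T) :
      c.pt ⟶ T :=
    Cofan.IsColimit.desc hc fun k => if h : k = i then eqToHom (congrArg F h) ≫ a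
      else Sigma.ι (fun k : {k // k ≠ i} => F k) ⟨k, h⟩ ≫ b
  have inj_desc {T : 𝒞} (a) (b) (k : I) : c.inj k ≫ desc (T := T) a b = _ :=
    Cofan.IsColimit.fac hc _ k
  refine BinaryCofan.IsColimit.mk _ desc (fun a b => ?_) (fun a b => ?_)
    (fun a b (m : c.pt ⟶ _) (ha : c.inj i ≫ m = a)
      (hb : (Sigma.desc fun k : {k // k ≠ i} => c.inj k) ≫ m = b) => ?_)
  · change c.inj i ≫ _ = _
    simp [inj_desc]
  · change (Sigma.desc fun k : {k // k ≠ i} => c.inj k) ≫ desc a b = b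
    exact Sigma.hom_ext _ _ fun k => by simp [inj_desc, k.2]
  · refine Cofan.IsColimit.hom_ext hc _ _ fun k => ?_
    rw [inj_desc]
    by_cases h : k = i
    · subst h
      simpa using ha
    · simpa [h] using Sigma.ι _ ⟨k, h⟩ ≫= hb

end CategoryTheory.Limits

namespace CategoryTheory.FinitaryExtensive

variable {𝒞 : Type*} [Category 𝒞] [FinitaryExtensive 𝒞] [HasPullbacks 𝒞]

noncomputable def isColimitPullbackSnd {X A B S : 𝒞} {f : A ⟶ X} {g : B ⟶ X}
    (hc : IsColimit (BinaryCofan.mk f g)) (m : S ⟶ X) :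
    IsColimit (BinaryCofan.mk (pullback.snd f m) (pullback.snd g m)) :=
  ((BinaryCofan.isVanKampen_iff _).1 (vanKampen _ hc) _ (pullback.fst f m) (pullback.fst g m) m
    pullback.condition pullback.condition).2
    ⟨(IsPullback.of_hasPullback f m).flip, (IsPullback.of_hasPullback g m).flip⟩ |>.some

end CategoryTheory.FinitaryExtensive

namespace CategoryTheory.Subobject

theorem eq_bot_iff_nonempty_isInitial {𝒞 : Type*} [Category 𝒞] [HasInitial 𝒞]
    [InitialMonoClass 𝒞] {X : 𝒞} {S : Subobject X} :
    S = ⊥ ↔ Nonempty (IsInitial (S : 𝒞)) := by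
  refine ⟨?_, fun ⟨h⟩ => ?_⟩
  · rintro rfl
    exact ⟨initialIsInitial.ofIso botCoeIsoInitial.symm⟩
  · rw [← mk_arrow S, bot_eq_initial_to]
    exact mk_eq_mk_of_comm _ _ (h.uniqueUpToIso initialIsInitial) (h.hom_ext _ _)

section FinitaryExtensive

variable {𝒞 : Type*} [Category 𝒞] [FinitaryExtensive 𝒞] [HasPullbacks 𝒞]
  [HasImages 𝒞]

theorem isCompl_mk_of_isColimit {X A B : 𝒞} {f : A ⟶ X} {g : B ⟶ X} [Mono f] [Mono g]
    (hc : IsColimit (BinaryCofan.mk f g)) : IsCompl (mk f) (mk g) := by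
  constructor
  · rw [disjoint_iff, eq_bot_iff_nonempty_isInitial]
    have hpb : IsPullback (initial.to A) (initial.to B) f g :=
      FinitaryExtensive.isPullback_initial_to_binaryCofan hc
    exact ⟨IsInitial.ofStrict (hpb.lift (ofLE _ _ _root_.inf_le_left ≫ (underlyingIso f).hom)
      (ofLE _ _ _root_.inf_le_right ≫ (underlyingIso g).hom)
      (by simp [underlyingIso_hom_comp_eq_mk])) initialIsInitial⟩
  · rw [codisjoint_iff]
    set S := mk f ⊔ mk g
    obtain ⟨d, hdf, hdg⟩ : { d : X ⟶ (S : 𝒞) // f ≫ d = _ ∧ g ≫ d = _ } :=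
      BinaryCofan.IsColimit.desc' hc
        ((underlyingIso f).inv ≫ ofLE _ S le_sup_left)
        ((underlyingIso g).inv ≫ ofLE _ S le_sup_right)
    have hd : d ≫ S.arrow = 𝟙 X := by
      refine BinaryCofan.IsColimit.hom_ext hc ?_ ?_
      · change f ≫ _ = f ≫ _
        simp [reassoc_of% hdf]
      · change g ≫ _ = g ≫ _
        simp [reassoc_of% hdg]
    have : IsSplitEpi S.arrow := ⟨⟨d, hd⟩⟩
    have : IsIso S.arrow := isIso_of_mono_of_isSplitEpi _
    exact eq_top_of_isIso_arrow S

theorem isCompl_pullback_mk_of_isColimit {X A B S : 𝒞} {f : A ⟶ X} {g : B ⟶ X}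
    [Mono f] [Mono g]
    (hc : IsColimit (BinaryCofan.mk f g)) (m : S ⟶ X) :
    IsCompl ((pullback m).obj (mk f)) ((pullback m).obj (mk g)) := by
  rw [pullback_obj_mk (IsPullback.of_hasPullback f m),
    pullback_obj_mk (IsPullback.of_hasPullback g m)]
  exact isCompl_mk_of_isColimit (FinitaryExtensive.isColimitPullbackSnd hc m)

theorem le_or_inf_eq_bot_of_isColimit {X A B : 𝒞} {f : A ⟶ X} {g : B ⟶ X} [Mono f] [Mono g]
    (hc : IsColimit (BinaryCofan.mk f g)) {S : Subobject X}
    (hS : ∀ T : Subobject (S : 𝒞), IsComplemented T → T = ⊥ ∨ T = ⊤) :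
    S ≤ mk f ∨ S ⊓ mk f = ⊥ := by
  rw [← inf_eq_left, inf_eq_map_pullback]
  rcases hS _ ⟨_, isCompl_pullback_mk_of_isColimit hc S.arrow⟩ with h | h <;> rw [h]
  · exact Or.inr (map_bot _)
  · exact Or.inl ((map_top _).trans (mk_arrow S))

variable [HasCoproducts.{w} 𝒞] {I : Type w} {X : 𝒞} {Zs : I → Subobject X}

noncomputable def isColimitArrowSigmaDescNe (hZ : IsIso (Limits.Sigma.desc fun i => (Zs i).arrow))
    (i : I) : IsColimit (BinaryCofan.mk (Zs i).arrow
      (Limits.Sigma.desc fun k : {k // k ≠ i} => (Zs k).arrow)) :=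
  Cofan.IsColimit.binaryCofanNe
    (Cofan.isColimitOfIsIsoSigmaDesc (Cofan.mk X fun i => (Zs i).arrow) (hc := hZ)) i

theorem disjoint_of_isIso_sigmaDesc (hZ : IsIso (Limits.Sigma.desc fun i => (Zs i).arrow))
    {i j : I} (hij : i ≠ j) : Disjoint (Zs i) (Zs j) := by
  have hc := isColimitArrowSigmaDescNe hZ i
  have : Mono (Limits.Sigma.desc fun k : {k // k ≠ i} => (Zs k).arrow) :=
    FinitaryExtensive.mono_inr_of_isColimit hc
  have hj : Zs j ≤ mk (Limits.Sigma.desc fun k : {k // k ≠ i} => (Zs k).arrow) := by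
    conv_lhs => rw [← mk_arrow (Zs j)]
    exact mk_le_mk_of_comm
      (Limits.Sigma.ι (fun k : {k // k ≠ i} => (Zs k : 𝒞)) ⟨j, hij.symm⟩) (by simp)
  simpa only [mk_arrow] using (isCompl_mk_of_isColimit hc).disjoint.mono_right hj

theorem eq_of_le_of_isIso_sigmaDesc (hZ : IsIso (Limits.Sigma.desc fun i => (Zs i).arrow))
    {i j : I} (hi : Zs i ≠ ⊥) (h : Zs i ≤ Zs j) : i = j := by
  by_contra hij
  exact hi (le_bot_iff.1 (disjoint_of_isIso_sigmaDesc hZ hij le_rfl h))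

theorem le_or_inf_eq_bot_of_isIso_sigmaDesc
    (hZ : IsIso (Limits.Sigma.desc fun i => (Zs i).arrow)) (i : I) {S : Subobject X}
    (hS : ∀ T : Subobject (S : 𝒞), IsComplemented T → T = ⊥ ∨ T = ⊤) :
    S ≤ Zs i ∨ S ⊓ Zs i = ⊥ := by
  have hc := isColimitArrowSigmaDescNe hZ i
  have : Mono (Limits.Sigma.desc fun k : {k // k ≠ i} => (Zs k).arrow) :=
    FinitaryExtensive.mono_inr_of_isColimit hc
  simpa only [mk_arrow] using le_or_inf_eq_bot_of_isColimit hc hS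

end FinitaryExtensive

end CategoryTheory.Subobject

namespace CategoryTheory.Sheaf

variable {C : Type u} [SmallCategory C] {J : GrothendieckTopology C}

theorem nonempty_isInitial_iff {F : Sheaf J (Type u)} :
    Nonempty (IsInitial F) ↔ ∀ U : C, F.obj.obj (op U) → ⊥ ∈ J U := by
  constructor
  · rintro ⟨hF⟩ U z
    let P : Cᵒᵖ ⥤ Type u := (Functor.const _).obj PEmpty
    have hP : IsInitial P := IsInitial.ofUniqueHom
      (fun W => ⟨fun o => TypeCat.ofHom fun x => (x : PEmpty).elim,
        fun _ _ _ => by ext x; exact x.elim⟩)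
      (fun W m => by ext o x; exact x.elim)
    let e := hF.uniqueUpToIso (IsInitial.isInitialObj (presheafToSheaf J (Type u)) _ hP)
    have hmem := Presheaf.imageSieve_mem J (toSheafify J P) (e.hom.hom.app (op U) z)
    have hbot : Presheaf.imageSieve (toSheafify J P) (e.hom.hom.app (op U) z) = ⊥ := by
      ext V g
      exact ⟨fun ⟨t, _⟩ => (t : PEmpty).elim, fun h => h.elim⟩
    rwa [hbot] at hmem
  · intro hF
    have hW (W : Sheaf J (Type u)) (U : C) (z : F.obj.obj (op U)) : Unique (W.obj.obj (op U)) :=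
      Types.isTerminalEquivUnique _ (W.isTerminalOfBotCover U (hF U z))
    refine ⟨IsInitial.ofUniqueHom (fun W => ObjectProperty.homMk
      ⟨fun o => TypeCat.ofHom fun z => (hW W o.unop z).default, fun o o' g => ?_⟩)
      fun W m => ?_⟩
    · ext z
      exact (hW W o'.unop (F.obj.map g z)).instSubsingleton.allEq _ _
    · ext o z
      exact (hW W o.unop z).instSubsingleton.allEq _ _

theorem iSup_imageSieve_ι_mem {I : Type u} (Z : I → Sheaf J (Type u)) {U : C}
    (s : (∐ Z).obj.obj (op U)) :
    (⨆ i, Presheaf.imageSieve (Limits.Sigma.ι Z i).hom s) ∈ J U := by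
  -- `∐ Z` is the sheafification of the presheaf coproduct, whose sections come from summands.
  let E := colimit.cocone (Discrete.functor Z ⋙ sheafToPresheaf J (Type u))
  let hE := isColimitSheafifyCocone E (colimit.isColimit _)
  let e := hE.coconePointUniqueUpToIso (colimit.isColimit (Discrete.functor Z))
  refine J.superset_covering ?_
    (Presheaf.imageSieve_mem J (toSheafify J E.pt) (e.inv.hom.app _ s))
  rintro V g ⟨t, ht⟩
  obtain ⟨⟨i⟩, t₀, rfl⟩ := Types.jointly_surjective_of_isColimit
    (isColimitOfPreserves ((evaluation _ _).obj (op V)) (colimit.isColimit _)) t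
  refine le_iSup (fun i => Presheaf.imageSieve (Limits.Sigma.ι Z i).hom s) i _ ⟨t₀, ?_⟩
  have hι := hE.comp_coconePointUniqueUpToIso_hom (colimit.isColimit (Discrete.functor Z)) ⟨i⟩
  calc (Limits.Sigma.ι Z i).hom.app (op V) t₀
      = e.hom.hom.app (op V) (((sheafifyCocone E).ι.app ⟨i⟩).hom.app (op V) t₀) :=
        (congr_arg (fun f => f.hom.app (op V) t₀) hι).symm
    _ = e.hom.hom.app (op V)
          ((toSheafify J E.pt).app (op V) ((E.ι.app ⟨i⟩).app (op V) t₀)) := by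
        rw [sheafifyCocone_ι_app_val]
        rfl
    _ = e.hom.hom.app (op V) ((sheafifyCocone E).pt.obj.map g.op (e.inv.hom.app (op U) s)) :=
        congr_arg _ ht
    _ = (∐ Z).obj.map g.op s := by
        rw [NatTrans.naturality_apply]
        exact congr_arg _ (congr_arg (fun f => f.hom.app (op U) s) e.inv_hom_id)

theorem iSup_imageSieve_mem_of_epi {I : Type u} {A : I → Sheaf J (Type u)} {X : Sheaf J (Type u)}
    (f : ∀ i, A i ⟶ X) [Epi (Limits.Sigma.desc f)] {U : C} (x : X.obj.obj (op U)) :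
    (⨆ i, Presheaf.imageSieve (f i).hom x) ∈ J U := by
  have : IsLocallySurjective (Limits.Sigma.desc f) := (isLocallySurjective_iff_epi _).2 ‹_›
  refine J.transitive (Presheaf.imageSieve_mem J (Limits.Sigma.desc f).hom x) _
    fun V g ⟨s, hs⟩ => J.superset_covering (iSup_le fun i W h hh => ?_)
      (iSup_imageSieve_ι_mem A s)
  obtain ⟨t, ht⟩ := hh
  refine le_iSup (fun i => Presheaf.imageSieve (f i).hom x) i _ ⟨t, ?_⟩
  rw [← Limits.Sigma.ι_desc f i]
  simp only [ObjectProperty.FullSubcategory.comp_hom, NatTrans.comp_app,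
    ConcreteCategory.comp_apply]
  rw [ht, NatTrans.naturality_apply, hs]
  simp

theorem subobject_eq_bot_of_forall_inf_eq_bot {X : Sheaf J (Type u)} {I : Type u}
    {Zs : I → Subobject X} [Epi (Limits.Sigma.desc fun i => (Zs i).arrow)] {S : Subobject X}
    (h : ∀ i, S ⊓ Zs i = ⊥) : S = ⊥ := by
  rw [Subobject.eq_bot_iff_nonempty_isInitial, nonempty_isInitial_iff]
  intro U y
  refine J.transitive (iSup_imageSieve_mem_of_epi (fun i => (Zs i).arrow) (S.arrow.hom.app _ y))
    ⊥ fun V g hg => ?_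
  obtain ⟨i, t, ht⟩ := (Sieve.iSup_apply g).1 hg
  rw [Sieve.pullback_bot]
  obtain ⟨p, -⟩ := Types.exists_of_isPullback
    ((Subobject.inf_isPullback S (Zs i)).map (sheafToPresheaf J _ ⋙ (evaluation _ _).obj (op V)))
    ((S : Sheaf J (Type u)).obj.map g.op y) t
    ((NatTrans.naturality_apply S.arrow.hom g.op y).trans ht.symm)
  exact nonempty_isInitial_iff.1 (Subobject.eq_bot_iff_nonempty_isInitial.1 (h i)) V p

end CategoryTheory.Sheaf

theorem isComplementedSub_iff_isComplemented {C : Type u} [SmallCategory C]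
    {J : GrothendieckTopology C} {X : Sheaf J (Type u)} (s : Subobject X) :
    IsComplementedSub s ↔ IsComplemented s := by
  simp only [IsComplementedSub, IsComplemented, isCompl_iff, disjoint_iff, codisjoint_iff]

theorem IsConnectedObj.subobject_ne_bot {C : Type u} [SmallCategory C]
    {J : GrothendieckTopology C} {X : Sheaf J (Type u)} {S : Subobject X}
    (hS : IsConnectedObj (S : Sheaf J (Type u))) : S ≠ ⊥ :=
  fun h => hS.1 (Subobject.eq_bot_iff_nonempty_isInitial.1 h)

theorem IsConnectedObj.exists_le_of_isIso_sigmaDesc {C : Type u} [SmallCategory C]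
    {J : GrothendieckTopology C} {X : Sheaf J (Type u)} {I : Type u} {Zs : I → Subobject X}
    (hZ : IsIso (Limits.Sigma.desc fun i => (Zs i).arrow)) {S : Subobject X}
    (hS : IsConnectedObj (S : Sheaf J (Type u))) : ∃ i, S ≤ Zs i := by
  by_contra! h
  refine hS.subobject_ne_bot (Sheaf.subobject_eq_bot_of_forall_inf_eq_bot (Zs := Zs) fun i => ?_)
  refine (Subobject.le_or_inf_eq_bot_of_isIso_sigmaDesc hZ i fun T hT => ?_).resolve_left (h i)
  exact hS.2 T ((isComplementedSub_iff_isComplemented T).2 hT)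

/-- uniqueness of sum decompositions into connected subobjects. -/
theorem connected_decomposition_unique
    {C : Type u} [SmallCategory C] {J : GrothendieckTopology C}
    (X : Sheaf J (Type u)) (I I' : Type u)
    (Xs : I → Subobject X) (Ys : I' → Subobject X)
    (hXc : ∀ i, IsConnectedObj ((Xs i : Sheaf J (Type u))))
    (hYc : ∀ j, IsConnectedObj ((Ys j : Sheaf J (Type u))))
    (hX : IsIso (Limits.Sigma.desc fun i => (Xs i).arrow))
    (hY : IsIso (Limits.Sigma.desc fun j => (Ys j).arrow)) :
    ∃ e : I ≃ I', ∀ i, Xs i = Ys (e i) := by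
  choose e he using fun i => (hXc i).exists_le_of_isIso_sigmaDesc hY
  choose e' he' using fun j => (hYc j).exists_le_of_isIso_sigmaDesc hX
  have he'e (i : I) : e' (e i) = i :=
    (Subobject.eq_of_le_of_isIso_sigmaDesc hX (hXc i).subobject_ne_bot ((he i).trans (he' _))).symm
  have hee' (j : I') : e (e' j) = j :=
    (Subobject.eq_of_le_of_isIso_sigmaDesc hY (hYc j).subobject_ne_bot ((he' j).trans (he _))).symm
  refine ⟨⟨e, e', he'e, hee'⟩, fun i => le_antisymm (he i) ?_⟩
  change Ys (e i) ≤ Xs i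
  simpa only [he'e] using he' (e i)
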